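/- If w ≡α w' (alpha-equivalence of right-non-shadowing words over the alphabet with binders), then lo(w) = lo(w'). -/

import Mathlib

inductive Letter (A : Type) : Type
  | free : A → Letter A
  | op   : A → Letter A
  | cl   : A → Letter A
  | both : A → Letter A

open scoped Classical

noncomputable def lo {A : Type} : List (Letter A) → Set A
  | [] => ∅
  | Letter.free a :: w => lo w ∪ {a}
  | Letter.op a :: w => lo w \ {a}
  | Letter.cl a :: w => lo w ∪ {a}
  | Letter.both a :: w => lo w \ {a}

noncomputable def lc {A : Type} : List (Letter A) → Set A
  | [] => ∅
  | Letter.free a :: w => lc w \ {a}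
  | Letter.op a :: w => lc w ∪ {a}
  | Letter.cl a :: w => lc w \ {a}
  | Letter.both a :: w => lc w ∪ {a}

noncomputable def rc {A : Type} : List (Letter A) → Set A
  | [] => ∅
  | Letter.free _ :: w => rc w
  | Letter.op _ :: w => rc w
  | Letter.cl a :: w => if a ∈ lc w ∪ lo w then rc w else rc w ∪ {a}
  | Letter.both a :: w => if a ∈ lc w ∪ lo w then rc w else rc w ∪ {a}

def RNS {A : Type} (w : List (Letter A)) : Prop :=
  ∀ u v : List (Letter A), w = u ++ v → rc u ∩ lo v = ∅

def swapL {A : Type} [DecidableEq A] (a c : A) : Letter A → Letter A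
  | Letter.free x => Letter.free (Equiv.swap a c x)
  | Letter.op x => Letter.op (Equiv.swap a c x)
  | Letter.cl x => Letter.cl (Equiv.swap a c x)
  | Letter.both x => Letter.both (Equiv.swap a c x)

def swapW {A : Type} [DecidableEq A] (a c : A) (w : List (Letter A)) : List (Letter A) :=
  w.map (swapL a c)

def dbL {A : Type} : Letter A → A
  | Letter.free a => a
  | Letter.op a => a
  | Letter.cl a => a
  | Letter.both a => a

def names {A : Type} (w : List (Letter A)) : Set A := {x | ∃ γ ∈ w, dbL γ = x}

/-- Abstraction equality ⟨a⟩w = ⟨b⟩w' on raw words. -/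
def absEq {A : Type} [DecidableEq A] (a : A) (w : List (Letter A)) (b : A)
    (w' : List (Letter A)) : Prop :=
  ∃ c : A, c ≠ a ∧ c ≠ b ∧ c ∉ names w ∧ c ∉ names w' ∧ swapW a c w = swapW b c w'

inductive AlphaEq {A : Type} [DecidableEq A] : List (Letter A) → List (Letter A) → Prop
  | nil : AlphaEq [] []
  | bind {a b : A} {w w' : List (Letter A)} (h : absEq a w b w') :
      AlphaEq (Letter.op a :: w) (Letter.op b :: w')
  | cong_free {a : A} {w w' : List (Letter A)} (h : AlphaEq w w') :
      AlphaEq (Letter.free a :: w) (Letter.free a :: w')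
  | cong_op {a : A} {w w' : List (Letter A)} (h : AlphaEq w w') :
      AlphaEq (Letter.op a :: w) (Letter.op a :: w')
  | cong_cl {a : A} {w w' : List (Letter A)} (h : AlphaEq w w') (ha : a ∉ lo w) :
      AlphaEq (Letter.cl a :: w) (Letter.cl a :: w')
  | cong_both {a b : A} {w w' : List (Letter A)} (h : AlphaEq w w')
      (ha : a ∉ lo w) (hb : b ∉ lo w) :
      AlphaEq (Letter.both a :: w) (Letter.both b :: w')
  | trans {w u v : List (Letter A)} (h1 : AlphaEq w u) (h2 : AlphaEq u v) : AlphaEq w v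

/-!
Every rule of `AlphaEq` preserves `lo`. The only non-structural case is the binding rule: renaming
along the transposition `(a c)` with `c` fresh maps `lo w \ {a}` onto `(a c) '' lo w \ {c}`, so
`swapW a c w = swapW b c w'` forces `lo w \ {a} = lo w' \ {b}`.
-/

lemma lo_subset_names {A : Type} (w : List (Letter A)) : lo w ⊆ names w := by
  induction w with
  | nil => simp [lo]
  | cons γ w ih =>
    have names_cons : names w ⊆ names (γ :: w) := fun _ ⟨δ, hδ, hx⟩ =>
      ⟨δ, List.mem_cons_of_mem _ hδ, hx⟩
    have head_mem : dbL γ ∈ names (γ :: w) := ⟨γ, List.mem_cons_self, rfl⟩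
    cases γ with
    | free _ | cl _ =>
      exact Set.union_subset (ih.trans names_cons) (Set.singleton_subset_iff.2 head_mem)
    | op _ | both _ => exact Set.sdiff_subset.trans (ih.trans names_cons)

lemma lo_swapW {A : Type} [DecidableEq A] (a c : A) (w : List (Letter A)) :
    lo (swapW a c w) = Equiv.swap a c '' lo w := by
  induction w with
  | nil => simp [swapW, lo]
  | cons γ w ih =>
    simp only [swapW] at ih ⊢
    cases γ <;>
      simp only [List.map_cons, swapL, lo, ih, Set.image_union,
        Set.image_sdiff (Equiv.swap a c).injective, Set.image_singleton]

lemma Set.image_swap_sdiff_singleton_of_notMem {α : Type*} [DecidableEq α] {s : Set α} {a c : α}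
    (hc : c ∉ s) : Equiv.swap a c '' s \ {c} = s \ {a} := by
  ext x
  rw [Set.mem_sdiff, Set.mem_sdiff, Set.mem_image_equiv, Equiv.symm_swap, Set.mem_singleton_iff,
    Set.mem_singleton_iff]
  by_cases hxa : x = a
  · subst hxa
    simp [hc]
  by_cases hxc : x = c
  · subst hxc
    simp [hc]
  rw [Equiv.swap_apply_of_ne_of_ne hxa hxc]
  tauto

lemma lo_sdiff_singleton_eq_of_absEq {A : Type} [DecidableEq A] {a b : A}
    {w w' : List (Letter A)} (h : absEq a w b w') : lo w \ {a} = lo w' \ {b} := by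
  obtain ⟨c, -, -, hcw, hcw', hswap⟩ := h
  calc lo w \ {a}
      = Equiv.swap a c '' lo w \ {c} :=
        (Set.image_swap_sdiff_singleton_of_notMem fun hc => hcw (lo_subset_names w hc)).symm
    _ = Equiv.swap b c '' lo w' \ {c} := by rw [← lo_swapW, ← lo_swapW, hswap]
    _ = lo w' \ {b} :=
        Set.image_swap_sdiff_singleton_of_notMem fun hc => hcw' (lo_subset_names w' hc)

theorem lo_eq_of_alphaEq {A : Type} [DecidableEq A] (w w' : List (Letter A))
    (h : AlphaEq w w') : lo w = lo w' := by
  induction h with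
  | nil => rfl
  | bind h => exact lo_sdiff_singleton_eq_of_absEq h
  | cong_free _ ih | cong_op _ ih | cong_cl _ _ ih => simp only [lo, ih]
  | cong_both _ ha hb ih =>
    simp only [lo, Set.sdiff_singleton_eq_self ha, Set.sdiff_singleton_eq_self hb, ← ih]
  | trans _ _ ih₁ ih₂ => exact ih₁.trans ih₂
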